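/- Suppose 𝐋₁,…,𝐋_d are random finite nonempty subsets of {1,…,k}, t ≥ 1 is an integer, and 𝐗 = #{i : |𝐋_i| ≤ t}. Given the lists, choose σ(i) ∈ 𝐋_i uniformly and independently for each i, and set 𝐋 = {1,…,k} \ {σ(i) : i ∈ [d]}. If k₀ := k - E[𝐗] > 0, then E[|𝐋|] ≥ k₀ · exp(-(1+1/t)·d/k₀). -/

import Mathlib

/-!
Fix the lists and let `p i c = [c ∈ L i] / |L i|` be the probability that `σ i = c`. Then the
expected number of uncovered colours is `∑ c, ∏ i, (1 - p i c)`. Split the product at the short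
lists (`|L i| ≤ t`): by the Weierstrass product inequality their part sums over `c` to at least
`k - X`, while each long-list factor is at least `exp (-(1 + 1/t) p i c)`, with total exponent
at most `(1 + 1/t) d`. The tangent line `exp (-b) ≥ exp (-y) (1 + y - b)` turns this into a
lower bound `exp (-y) ((1 + y) (k - X) - (1 + 1/t) d)` that is affine in `X`, so it survives
averaging over the lists; the choice `y = (1 + 1/t) d / k₀` makes the average `k₀ exp (-y)`.
-/

open Finset Real

theorem one_sub_sum_le_prod_one_sub {ι : Type*} (s : Finset ι) (x : ι → ℝ)
    (h0 : ∀ i ∈ s, 0 ≤ x i) (h1 : ∀ i ∈ s, x i ≤ 1) :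
    1 - ∑ i ∈ s, x i ≤ ∏ i ∈ s, (1 - x i) := by
  induction s using Finset.cons_induction with
  | empty => simp
  | cons j s hj ih =>
    rw [prod_cons, sum_cons]
    have hs : 0 ≤ ∑ i ∈ s, x i := sum_nonneg fun i hi ↦ h0 i (mem_cons_of_mem hi)
    have hxj : 0 ≤ 1 - x j := by linarith [h1 j (mem_cons_self ..)]
    have := mul_le_mul_of_nonneg_left
      (ih (fun i hi ↦ h0 i (mem_cons_of_mem hi)) (fun i hi ↦ h1 i (mem_cons_of_mem hi))) hxj
    nlinarith [h0 j (mem_cons_self ..)]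

theorem exp_neg_le_one_sub {t u : ℝ} (ht : 0 < t) (hu : 0 ≤ u) (htu : (t + 1) * u ≤ 1) :
    exp (-((1 + 1 / t) * u)) ≤ 1 - u := by
  have hx : 0 < 1 + (1 + 1 / t) * u := by positivity
  have key : 1 ≤ (1 - u) * (1 + (1 + 1 / t) * u) := by
    have : (1 - u) * (1 + (1 + 1 / t) * u) = 1 + u / t * (1 - (t + 1) * u) := by
      field_simp; ring
    rw [this]
    have : 0 ≤ u / t * (1 - (t + 1) * u) := mul_nonneg (by positivity) (by linarith)
    linarith
  calc exp (-((1 + 1 / t) * u)) = (exp ((1 + 1 / t) * u))⁻¹ := exp_neg _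
    _ ≤ (1 + (1 + 1 / t) * u)⁻¹ := by
        gcongr; linarith [add_one_le_exp ((1 + 1 / t) * u)]
    _ ≤ 1 - u := by rwa [inv_le_iff_one_le_mul₀ hx]

theorem exp_neg_mul_le_sum_mul_exp_neg {ι : Type*} (s : Finset ι) (q b : ι → ℝ)
    (hq0 : ∀ i ∈ s, 0 ≤ q i) (hq1 : ∀ i ∈ s, q i ≤ 1) (hb : ∀ i ∈ s, 0 ≤ b i) (y : ℝ) :
    exp (-y) * ((1 + y) * ∑ i ∈ s, q i - ∑ i ∈ s, b i) ≤ ∑ i ∈ s, q i * exp (-b i) := by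
  have tangent : ∀ i ∈ s, exp (-y) * ((1 + y) * q i - b i) ≤ q i * exp (-b i) := by
    intro i hi
    have hexp : exp (-b i) = exp (-y) * exp (y - b i) := by rw [← exp_add]; ring_nf
    have h1 := mul_le_mul_of_nonneg_left (add_one_le_exp (y - b i)) (hq0 i hi)
    have h2 : q i * b i ≤ b i := mul_le_of_le_one_left (hb i hi) (hq1 i hi)
    rw [hexp]
    nlinarith [exp_pos (-y)]
  calc exp (-y) * ((1 + y) * ∑ i ∈ s, q i - ∑ i ∈ s, b i)
      = ∑ i ∈ s, exp (-y) * ((1 + y) * q i - b i) := by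
        rw [← mul_sum, sum_sub_distrib, mul_sum]
    _ ≤ _ := sum_le_sum tangent

section

variable {ι α : Type*} [DecidableEq α] (L : ι → Finset α)

theorem sum_card_filter_forall_ne [Fintype ι] [DecidableEq ι] (U : Finset α) :
    ∑ σ : ∀ i, {x // x ∈ L i}, #{c ∈ U | ∀ i, (σ i : α) ≠ c} =
      ∑ c ∈ U, ∏ i, #((L i).erase c) := by
  simp only [card_filter]
  rw [sum_comm]
  refine sum_congr rfl fun c _ ↦ ?_
  simp_rw [← Fintype.prod_boole, ← Fintype.prod_sum fun i (x : {x // x ∈ L i}) ↦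
    if (x : α) ≠ c then 1 else 0]
  refine prod_congr rfl fun i _ ↦ ?_
  rw [sum_coe_sort (L i) fun x ↦ if x ≠ c then 1 else 0, ← sum_filter, ← filter_ne' (L i) c,
    card_eq_sum_ones]

noncomputable def hitProb (i : ι) (c : α) : ℝ := if c ∈ L i then (#(L i) : ℝ)⁻¹ else 0

variable {L}

theorem hitProb_nonneg (i : ι) (c : α) : 0 ≤ hitProb L i c := by
  unfold hitProb; split_ifs <;> positivity

theorem hitProb_le_one (hne : ∀ i, (L i).Nonempty) (i : ι) (c : α) : hitProb L i c ≤ 1 := by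
  unfold hitProb; split_ifs
  · exact inv_le_one_of_one_le₀ (mod_cast (hne i).card_pos)
  · exact zero_le_one

theorem sum_hitProb {U : Finset α} (hne : ∀ i, (L i).Nonempty) (hsub : ∀ i, L i ⊆ U) (i : ι) :
    ∑ c ∈ U, hitProb L i c = 1 := by
  simp only [hitProb]
  rw [sum_ite_mem, inter_eq_right.mpr (hsub i), sum_const, nsmul_eq_mul]
  exact mul_inv_cancel₀ (mod_cast (hne i).card_pos.ne')

theorem card_erase_div_card (hne : ∀ i, (L i).Nonempty) (i : ι) (c : α) :
    (#((L i).erase c) : ℝ) / #(L i) = 1 - hitProb L i c := by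
  have hpos : (0 : ℝ) < #(L i) := mod_cast (hne i).card_pos
  unfold hitProb
  split_ifs with h
  · rw [card_erase_of_mem h, Nat.cast_sub (hne i).card_pos, Nat.cast_one]
    field_simp
  · rw [erase_eq_of_notMem h, div_self hpos.ne', sub_zero]

theorem expected_card_uncovered [Fintype ι] [DecidableEq ι] (U : Finset α)
    (hne : ∀ i, (L i).Nonempty) :
    (∑ σ : ∀ i, {x // x ∈ L i}, (#{c ∈ U | ∀ i, (σ i : α) ≠ c} : ℝ)) /
        Fintype.card (∀ i, {x // x ∈ L i}) =
      ∑ c ∈ U, ∏ i, (1 - hitProb L i c) := by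
  rw [← Nat.cast_sum, sum_card_filter_forall_ne, Fintype.card_pi]
  push_cast
  rw [sum_div]
  refine sum_congr rfl fun c _ ↦ ?_
  simp only [Fintype.card_coe, ← prod_div_distrib, card_erase_div_card hne]

theorem exp_neg_mul_hitProb_le (t : ℕ) (ht : 1 ≤ t) {i : ι} (hi : t < #(L i)) (c : α) :
    exp (-((1 + 1 / (t : ℝ)) * hitProb L i c)) ≤ 1 - hitProb L i c := by
  have htR : (1 : ℝ) ≤ t := mod_cast ht
  have hiR : (t : ℝ) + 1 ≤ #(L i) := mod_cast hi
  unfold hitProb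
  split_ifs
  · refine exp_neg_le_one_sub (by linarith) (by positivity) ?_
    rw [← div_eq_mul_inv, div_le_one (by linarith)]
    exact hiR
  · simp

theorem exp_neg_mul_le_expected_card_uncovered [Fintype ι] {U : Finset α} {t : ℕ} (ht : 1 ≤ t)
    (hne : ∀ i, (L i).Nonempty) (hsub : ∀ i, L i ⊆ U) {y : ℝ} (hy : 0 ≤ 1 + y) :
    exp (-y) * ((1 + y) * ((#U : ℝ) - #{i | #(L i) ≤ t}) - (1 + 1 / (t : ℝ)) * Fintype.card ι) ≤
      ∑ c ∈ U, ∏ i, (1 - hitProb L i c) := by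
  set S : Finset ι := {i | #(L i) ≤ t}
  set T : Finset ι := {i | ¬#(L i) ≤ t}
  set q : α → ℝ := fun c ↦ ∏ i ∈ S, (1 - hitProb L i c)
  set b : α → ℝ := fun c ↦ ∑ i ∈ T, (1 + 1 / (t : ℝ)) * hitProb L i c
  have hp0 := hitProb_nonneg (L := L)
  have hp1 := hitProb_le_one hne
  have hq : (#U : ℝ) - #S ≤ ∑ c ∈ U, q c :=
    calc (#U : ℝ) - #S = ∑ c ∈ U, (1 - ∑ i ∈ S, hitProb L i c) := by
          rw [sum_sub_distrib, sum_comm, sum_congr rfl fun i _ ↦ sum_hitProb hne hsub i]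
          simp
      _ ≤ ∑ c ∈ U, q c := sum_le_sum fun c _ ↦
          one_sub_sum_le_prod_one_sub _ _ (fun i _ ↦ hp0 i c) fun i _ ↦ hp1 i c
  have hb : ∑ c ∈ U, b c ≤ (1 + 1 / (t : ℝ)) * Fintype.card ι := by
    simp only [b, ← mul_sum]
    rw [sum_comm, sum_congr rfl fun i _ ↦ sum_hitProb hne hsub i, sum_const, nsmul_one]
    gcongr
    exact_mod_cast card_le_univ T
  have hprod : ∀ c ∈ U, q c * exp (-b c) ≤ ∏ i, (1 - hitProb L i c) := by
    intro c _
    rw [← prod_filter_mul_prod_filter_not univ fun i ↦ #(L i) ≤ t]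
    refine mul_le_mul_of_nonneg_left ?_ (prod_nonneg fun i _ ↦ sub_nonneg.2 (hp1 i c))
    rw [← sum_neg_distrib, exp_sum]
    refine prod_le_prod (fun i _ ↦ (exp_pos _).le) fun i hi ↦ ?_
    exact exp_neg_mul_hitProb_le t ht (not_le.1 (mem_filter.1 hi).2) c
  calc exp (-y) * ((1 + y) * ((#U : ℝ) - #S) - (1 + 1 / (t : ℝ)) * Fintype.card ι)
      ≤ exp (-y) * ((1 + y) * ∑ c ∈ U, q c - ∑ c ∈ U, b c) := by gcongr
    _ ≤ ∑ c ∈ U, q c * exp (-b c) :=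
        exp_neg_mul_le_sum_mul_exp_neg U q b
          (fun c _ ↦ prod_nonneg fun i _ ↦ sub_nonneg.2 (hp1 i c))
          (fun c _ ↦ prod_le_one (fun i _ ↦ sub_nonneg.2 (hp1 i c))
            fun i _ ↦ sub_le_self _ (hp0 i c))
          (fun c _ ↦ sum_nonneg fun i _ ↦ mul_nonneg (by positivity) (hp0 i c)) y
    _ ≤ _ := sum_le_sum hprod

end

theorem stmt_4 (d k t : ℕ) (ht : 1 ≤ t)
    (Ω : Type) [Fintype Ω] (w : Ω → ℝ) (hw0 : ∀ ω, 0 ≤ w ω) (hw1 : ∑ ω, w ω = 1)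
    (L : Ω → Fin d → Finset ℕ)
    (hne : ∀ ω i, (L ω i).Nonempty) (hsub : ∀ ω i, L ω i ⊆ Finset.Icc 1 k)
    (k₀ : ℝ)
    (hk₀ : k₀ = (k : ℝ) -
      ∑ ω, w ω * ((Finset.univ.filter (fun i : Fin d => (L ω i).card ≤ t)).card : ℝ))
    (hk₀pos : 0 < k₀) :
    k₀ * Real.exp (-(1 + 1 / (t : ℝ)) * d / k₀) ≤
      ∑ ω, w ω *
        ((∑ σ : ∀ i : Fin d, {n // n ∈ L ω i},
            (((Finset.Icc 1 k).filter (fun c => ∀ i, (σ i : ℕ) ≠ c)).card : ℝ))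
          / (Fintype.card (∀ i : Fin d, {n // n ∈ L ω i}) : ℝ)) := by
  set y := (1 + 1 / (t : ℝ)) * d / k₀
  set X : Ω → ℝ := fun ω ↦ #{i | #(L ω i) ≤ t}
  have hX : ∑ ω, w ω * X ω = k - k₀ := by rw [hk₀]; ring
  have hy : y * k₀ = (1 + 1 / (t : ℝ)) * d := div_mul_cancel₀ _ hk₀pos.ne'
  have hy0 : 0 ≤ 1 + y := add_nonneg zero_le_one (div_nonneg (by positivity) hk₀pos.le)
  have hω : ∀ ω, exp (-y) * ((1 + y) * (k - X ω) - (1 + 1 / (t : ℝ)) * d) ≤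
      (∑ σ : ∀ i : Fin d, {n // n ∈ L ω i}, (#{c ∈ Icc 1 k | ∀ i, (σ i : ℕ) ≠ c} : ℝ)) /
        Fintype.card (∀ i : Fin d, {n // n ∈ L ω i}) := fun ω ↦ by
    convert exp_neg_mul_le_expected_card_uncovered ht (hne ω) (hsub ω) hy0 using 1
    · simp [X]
    -- `convert` reconciles the `Decidable` instances of `∀ i : Fin d, _` and `∀ i : ι, _`
    · convert expected_card_uncovered _ (hne ω)
  calc k₀ * exp (-(1 + 1 / (t : ℝ)) * d / k₀)
      = exp (-y) * ((1 + y) * (k * ∑ ω, w ω - ∑ ω, w ω * X ω) -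
          (1 + 1 / (t : ℝ)) * d * ∑ ω, w ω) := by
        rw [hw1, hX, neg_mul, neg_div]
        linear_combination (-exp (-y)) * hy
    _ = ∑ ω, w ω * (exp (-y) * ((1 + y) * (k - X ω) - (1 + 1 / (t : ℝ)) * d)) := by
        simp only [mul_sum]
        rw [← sum_sub_distrib, mul_sum, ← sum_sub_distrib, mul_sum]
        exact sum_congr rfl fun ω _ ↦ by ring
    _ ≤ _ := sum_le_sum fun ω _ ↦ mul_le_mul_of_nonneg_left (hω ω) (hw0 ω)
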